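/- For P₁, P₂ ∈ 𝒫 and A₁₂ ∈ p(n) with e^{A₁₂} = √(P₁⁻¹ P₂² P₁⁻¹), the curve φ(t) = √(P₁ e^{2tA₁₂} P₁) satisfies φ(0) = P₁ and φ(1) = P₂, and φ(t) ∈ 𝒫 for all t ∈ [0,1]. -/

import Mathlib

/-!
Since `A₁₂` is symmetric and traceless, `E = e^{2tA₁₂}` is positive semidefinite with
`det E = e^{2t tr A₁₂} = 1`, so `P₁ E P₁` is positive semidefinite of determinant one and so is its
square root `φ(t)` (it is invertible, hence positive definite). At the end points
`e^{0} = 1` gives `φ(0) = √(P₁²) = P₁`, and `e^{2A₁₂} = (e^{A₁₂})² = P₁⁻¹ P₂² P₁⁻¹` gives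
`φ(1) = √(P₂²) = P₂`.
-/

open Matrix

/-- The (total) symmetric positive-semidefinite square root of a matrix. -/
noncomputable def sqrtm {n : ℕ} (A : Matrix (Fin n) (Fin n) ℝ) : Matrix (Fin n) (Fin n) ℝ :=
  letI := Classical.dec A.PosSemidef
  if h : A.PosSemidef then
    (h.1.eigenvectorUnitary.1 * diagonal ((↑) ∘ (√·) ∘ h.1.eigenvalues) *
      (star h.1.eigenvectorUnitary : Matrix (Fin n) (Fin n) ℝ)) else 0

open scoped MatrixOrder

section sqrtm

variable {n : ℕ} {M : Matrix (Fin n) (Fin n) ℝ}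

lemma sqrtm_eq_cfcSqrt (hM : M.PosSemidef) : sqrtm M = CFC.sqrt M := by
  rw [sqrtm, dif_pos hM, CFC.sqrt_eq_cfc, cfc_nnreal_eq_real _ M hM.nonneg, hM.1.cfc_eq,
    IsHermitian.cfc, Unitary.conjStarAlgAut_apply]
  congr 3
  funext i
  simp [max_eq_left (hM.eigenvalues_nonneg i)]

lemma sq_sqrtm (hM : M.PosSemidef) : sqrtm M ^ 2 = M := by
  rw [sqrtm_eq_cfcSqrt hM, CFC.sq_sqrt M hM.nonneg]

lemma sqrtm_sq (hM : M.PosSemidef) : sqrtm (M ^ 2) = M := by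
  rw [sqrtm_eq_cfcSqrt (hM.pow 2)]
  exact CFC.sqrt_unique (sq M).symm hM.nonneg

lemma det_sqrtm (hM : M.PosSemidef) : (sqrtm M).det = √M.det := by
  rw [sqrtm_eq_cfcSqrt hM, hM.det_sqrt, RCLike.sqrt_of_nonneg hM.det_nonneg]
  rfl

lemma posSemidef_sqrtm (hM : M.PosSemidef) : (sqrtm M).PosSemidef := by
  rw [sqrtm_eq_cfcSqrt hM]
  exact (CFC.sqrt_nonneg M).posSemidef

lemma posDef_sqrtm (hM : M.PosSemidef) (hdet : M.det ≠ 0) : (sqrtm M).PosDef := by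
  rw [(posSemidef_sqrtm hM).posDef_iff_det_ne_zero, det_sqrtm hM]
  exact (Real.sqrt_pos.2 (lt_of_le_of_ne hM.det_nonneg hdet.symm)).ne'

end sqrtm

namespace Matrix.IsHermitian

variable {ι : Type*} [Fintype ι] [DecidableEq ι] {A : Matrix ι ι ℝ}

-- The CFC lemmas below need a normed ring structure; `NormedSpace.exp` itself depends only on
-- the topology, which the L2 operator norm induces.
open scoped Matrix.Norms.L2Operator in
lemma posSemidef_exp (hA : A.IsHermitian) : (NormedSpace.exp A).PosSemidef :=
  (IsSelfAdjoint.exp_nonneg hA).posSemidef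

open scoped Matrix.Norms.L2Operator in
lemma det_exp (hA : A.IsHermitian) : (NormedSpace.exp A).det = Real.exp A.trace := by
  rw [← CFC.real_exp_eq_normedSpace_exp hA, hA.cfc_eq, hA.trace_eq_sum_eigenvalues, Real.exp_sum]
  simp [IsHermitian.cfc, -Unitary.conjStarAlgAut_apply]

end Matrix.IsHermitian

theorem geodesic_on_P_general (n : ℕ) (P₁ P₂ A₁₂ : Matrix (Fin n) (Fin n) ℝ)
    (h₁ : P₁.PosDef) (h₁d : P₁.det = 1) (h₂ : P₂.PosDef)
    (hA : A₁₂ᵀ = A₁₂) (hAtr : A₁₂.trace = 0)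
    (hAexp : NormedSpace.exp A₁₂ = sqrtm (P₁⁻¹ * P₂ ^ 2 * P₁⁻¹)) :
    (sqrtm (P₁ * NormedSpace.exp ((2 * (0:ℝ)) • A₁₂) * P₁) = P₁) ∧
    (sqrtm (P₁ * NormedSpace.exp ((2 * (1:ℝ)) • A₁₂) * P₁) = P₂) ∧
    (∀ t ∈ Set.Icc (0:ℝ) 1,
      (sqrtm (P₁ * NormedSpace.exp ((2 * t) • A₁₂) * P₁)).PosDef ∧
      (sqrtm (P₁ * NormedSpace.exp ((2 * t) • A₁₂) * P₁)).det = 1) := by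
  have hP₁ : IsUnit P₁.det := by rw [h₁d]; exact isUnit_one
  have hAH : A₁₂.IsHermitian := isHermitian_iff_isSymm.2 hA
  refine ⟨?_, ?_, fun t _ => ?_⟩
  · rw [mul_zero, zero_smul, NormedSpace.exp_zero, mul_one, ← sq, sqrtm_sq h₁.posSemidef]
  · have hN : (P₁⁻¹ * P₂ ^ 2 * P₁⁻¹).PosSemidef := by
      have := (h₂.posSemidef.pow 2).mul_mul_conjTranspose_same P₁⁻¹
      rwa [h₁.inv.isHermitian.eq] at this
    have hexp : NormedSpace.exp ((2 * (1:ℝ)) • A₁₂) = P₁⁻¹ * P₂ ^ 2 * P₁⁻¹ := by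
      rw [mul_one, ofNat_smul_eq_nsmul, Matrix.exp_nsmul, hAexp, sq_sqrtm hN]
    rw [hexp, ← mul_assoc, ← mul_assoc, mul_nonsing_inv _ hP₁, one_mul,
      nonsing_inv_mul_cancel_right _ _ hP₁, sqrtm_sq h₂.posSemidef]
  · have hEH : ((2 * t) • A₁₂).IsHermitian := hAH.smul (.all _)
    have hM : (P₁ * NormedSpace.exp ((2 * t) • A₁₂) * P₁).PosSemidef := by
      have := hEH.posSemidef_exp.mul_mul_conjTranspose_same P₁
      rwa [h₁.isHermitian.eq] at this
    have hMdet : (P₁ * NormedSpace.exp ((2 * t) • A₁₂) * P₁).det = 1 := by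
      rw [det_mul, det_mul, h₁d, hEH.det_exp, trace_smul, hAtr, smul_zero, Real.exp_zero, one_mul,
        one_mul]
    refine ⟨posDef_sqrtm hM (by rw [hMdet]; exact one_ne_zero), ?_⟩
    rw [det_sqrtm hM, hMdet, Real.sqrt_one]

/-- For `P₁, P₂ ∈ 𝒫` and `A₁₂ ∈ p(n)` with `e^{A₁₂} = √(P₁⁻¹ P₂² P₁⁻¹)`, the curve
`φ(t) = √(P₁ e^{2 t A₁₂} P₁)` satisfies `φ(0) = P₁`, `φ(1) = P₂`, and `φ(t) ∈ 𝒫` for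
all `t ∈ [0, 1]`. -/
theorem geodesic_on_P (n : ℕ) (P₁ P₂ A₁₂ : Matrix (Fin n) (Fin n) ℝ)
    (h₁ : P₁.PosDef) (h₁d : P₁.det = 1) (h₂ : P₂.PosDef) (h₂d : P₂.det = 1)
    (hA : A₁₂ᵀ = A₁₂) (hAtr : A₁₂.trace = 0)
    (hAexp : NormedSpace.exp A₁₂ = sqrtm (P₁⁻¹ * P₂ ^ 2 * P₁⁻¹)) :
    (sqrtm (P₁ * NormedSpace.exp ((2 * (0:ℝ)) • A₁₂) * P₁) = P₁) ∧
    (sqrtm (P₁ * NormedSpace.exp ((2 * (1:ℝ)) • A₁₂) * P₁) = P₂) ∧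
    (∀ t ∈ Set.Icc (0:ℝ) 1,
      (sqrtm (P₁ * NormedSpace.exp ((2 * t) • A₁₂) * P₁)).PosDef ∧
      (sqrtm (P₁ * NormedSpace.exp ((2 * t) • A₁₂) * P₁)).det = 1) :=
  geodesic_on_P_general n P₁ P₂ A₁₂ h₁ h₁d h₂ hA hAtr hAexp
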